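/- arXiv:2406.07340 — 6 statements merged into one kernel-verified Lean document; each statement's English description precedes it below -/
import Mathlib

section
/- If a function f on maps (partial states) has scope S (i.e., f agrees on any two maps whose restrictions to S coincide) and also has scope T, and the domain set of states considered is closed under arbitrary recombination of coordinates, then f has scope S ∩ T. -/
open Classical in
/-- If `f` has scope `S` on `X` and scope `T` on `X`, and `X` is closed under
recombination of coordinates, then `f` has scope `S ∩ T` on `X`. -/
theorem scope_inter {α : Type*} (X : Set (ℕ → Option α)) (f : (ℕ → Option α) → ℝ)
    (S T : Set ℕ)
    (hX : ∀ x ∈ X, ∀ y ∈ X, ∀ U : Set ℕ,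
      (fun i => if i ∈ U then x i else y i) ∈ X)
    (hS : ∀ x ∈ X, ∀ y ∈ X, (∀ i ∈ S, x i = y i) → f x = f y)
    (hT : ∀ x ∈ X, ∀ y ∈ X, (∀ i ∈ T, x i = y i) → f x = f y) :
    ∀ x ∈ X, ∀ y ∈ X, (∀ i ∈ S ∩ T, x i = y i) → f x = f y := by
  intro x hx y hy h
  set z : ℕ → Option α := fun i => if i ∈ S then x i else y i with hz
  have hzX : z ∈ X := hX x hx y hy S
  have h1 : f x = f z := hS x hx z hzX (fun i hi => by simp [hz, hi])
  have h2 : f z = f y := hT z hzX y hy (fun i hi => by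
    by_cases hiS : i ∈ S
    · simpa [hz, hiS] using h i ⟨hiS, hi⟩
    · simp [hz, hiS])
  rw [h1, h2]
end

section
/- If each coordinate transition P_i^a : X → pmf(D_i) has scope Γ_i ⊆ {0..<n}, and h : X → ℝ has scope H ⊆ {0..<n}, then the expected next-step value g^a(x) = Σ_{x' ∈ X} (Π_{i<n} P_i^a(x)(x'_i)) · h(x') is a scoped function with scope ⋃_{j ∈ H} Γ_j. -/
open BigOperators

/-- if each coordinate transition `P i` has scope `Γ i` and `h` has scope `H`,
then the expected next-step value `g a x = ∑ x', (∏ i, P i x (x' i)) * h x'` has scope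
`⋃ j ∈ H, Γ j`. -/
theorem backprojection_scope {n : ℕ} (D : Fin n → Type*)
    [∀ i, Fintype (D i)] [∀ i, Nonempty (D i)]
    (P : (i : Fin n) → ((j : Fin n) → D j) → D i → ℝ)
    (Γ : Fin n → Set (Fin n)) (h : ((j : Fin n) → D j) → ℝ) (H : Set (Fin n))
    (hpmf : ∀ i x, ∑ y : D i, P i x y = 1)
    (hP : ∀ i, ∀ x y : (j : Fin n) → D j, (∀ j ∈ Γ i, x j = y j) → P i x = P i y)
    (hh : ∀ x y : (j : Fin n) → D j, (∀ j ∈ H, x j = y j) → h x = h y) :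
    ∀ x y : (j : Fin n) → D j, (∀ j ∈ ⋃ i ∈ H, Γ i, x j = y j) →
      (∑ x' : (j : Fin n) → D j, (∏ i, P i x (x' i)) * h x') =
      (∑ x' : (j : Fin n) → D j, (∏ i, P i y (x' i)) * h x') := by
  classical
  intro x y hxy
  set p : Fin n → Prop := fun j => j ∈ H with hp
  set e := Equiv.piEquivPiSubtypeProd p D with he
  set hH : ((j : {j // p j}) → D j) → ℝ :=
    fun a => h (e.symm (a, Classical.arbitrary _)) with hhH
  have key : ∀ z : (j : Fin n) → D j,
      (∑ x' : (j : Fin n) → D j, (∏ i, P i z (x' i)) * h x') =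
      ∑ a : (j : {j // p j}) → D j,
        (∏ i : {j // p j}, P i.1 z (a i)) * hH a := by
    intro z
    rw [← e.symm.sum_comp, Fintype.sum_prod_type]
    refine Finset.sum_congr rfl fun a _ => ?_
    have hterm : ∀ b : (j : {j // ¬ p j}) → D j,
        (∏ i, P i z ((e.symm (a, b)) i)) * h (e.symm (a, b)) =
        ((∏ i : {j // p j}, P i.1 z (a i)) * hH a) *
          (∏ i : {j // ¬ p j}, P i.1 z (b i)) := by
      intro b
      have hsplit : (∏ i, P i z ((e.symm (a, b)) i)) =
          (∏ i : {j // p j}, P i.1 z ((e.symm (a, b)) i.1)) *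
          (∏ i : {j // ¬ p j}, P i.1 z ((e.symm (a, b)) i.1)) :=
        (Fintype.prod_subtype_mul_prod_subtype p fun i => P i z ((e.symm (a, b)) i)).symm
      have h1 : ∀ i : {j // p j}, (e.symm (a, b)) i.1 = a i := by
        intro i
        simp [he, Equiv.piEquivPiSubtypeProd_symm_apply, i.2]
      have h2 : ∀ i : {j // ¬ p j}, (e.symm (a, b)) i.1 = b i := by
        intro i
        simp [he, Equiv.piEquivPiSubtypeProd_symm_apply, i.2]
      have h3 : h (e.symm (a, b)) = hH a := by
        apply hh
        intro j hj
        simp [he, Equiv.piEquivPiSubtypeProd_symm_apply, hp, hj]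
      rw [hsplit]
      simp only [h1, h2, h3]
      ring
    rw [Finset.sum_congr rfl fun b _ => hterm b, ← Finset.mul_sum]
    have hsum : (∑ b : (j : {j // ¬ p j}) → D j,
        ∏ i : {j // ¬ p j}, P i.1 z (b i)) = 1 := by
      rw [← Fintype.prod_sum fun (i : {j // ¬ p j}) (v : D i.1) => P i.1 z v]
      simp [hpmf]
    rw [hsum, mul_one]
  rw [key x, key y]
  refine Finset.sum_congr rfl fun a _ => ?_
  congr 1
  refine Finset.prod_congr rfl fun i _ => ?_
  have : P i.1 x = P i.1 y := by
    apply hP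
    intro j hj
    exact hxy j (Set.mem_biUnion i.2 hj)
  rw [this]
end

section
/- One step of variable elimination preserves the maximum: if E is the set of functions in fs whose scope contains variable l, E' the rest, and e(x) = max_{y ∈ D_l} Σ_{f ∈ E} f(x[l ↦ y]), then max over all full states x of Σ_{f ∈ fs} f(x) equals max over full states of (e(x) + Σ_{f ∈ E'} f(x)). -/
/-! Maximising over `x` is the same as first fixing all coordinates but `l` and maximising over
`x l`. The functions whose scope avoids `l` do not see `x l`, so their sum is a constant for
the inner maximum and can be pulled out of it. -/

open Function

section

variable {ι : Type*} [DecidableEq ι] {α : ι → Type*}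

theorem DependsOn.apply_update_of_notMem {β : Type*} {f : (Π i, α i) → β} {s : Set ι}
    (hf : DependsOn f s) {l : ι} (hl : l ∉ s) (x : Π i, α i) (y : α l) :
    f (Function.update x l y) = f x :=
  hf fun _ hj => update_of_ne (ne_of_mem_of_not_mem hj hl) _ _

theorem ciSup_eq_ciSup_ciSup_update [Finite ι] [∀ i, Finite (α i)] [∀ i, Nonempty (α i)]
    {β : Type*} [ConditionallyCompleteLattice β] (h : (Π i, α i) → β) (l : ι) :
    ⨆ x, h x = ⨆ x, ⨆ y : α l, h (update x l y) := by
  have : Nonempty β := ⟨h (Classical.arbitrary _)⟩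
  refine le_antisymm (ciSup_mono (Finite.bddAbove_range _) fun x => ?_)
    (ciSup_le fun x => ciSup_le fun y => le_ciSup (Finite.bddAbove_range h) _)
  simpa only [update_eq_self] using
    le_ciSup (Finite.bddAbove_range fun y : α l => h (update x l y)) (x l)

end

/-- one step of variable elimination preserves the maximum.
`fs` is a list of scoped functions (function paired with its scope), `l` is the variable
being eliminated, `E` collects the functions whose scope contains `l`, `E'` the rest, and
`e x = ⨆ y ∈ D l, ∑ f ∈ E, f (x[l ↦ y])`. -/
theorem elim_step_preserves_max {n : ℕ} (D : Fin n → Type*)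
    [∀ i, Fintype (D i)] [∀ i, Nonempty (D i)]
    (fs : List ((((i : Fin n) → D i) → ℝ) × Finset (Fin n)))
    (l : Fin n)
    (hscope : ∀ f ∈ fs, ∀ x y : (i : Fin n) → D i,
      (∀ j ∈ f.2, x j = y j) → f.1 x = f.1 y) :
    (⨆ x : (i : Fin n) → D i, ((fs.map (fun f => f.1 x)).sum)) =
    (⨆ x : (i : Fin n) → D i,
      ((⨆ y : D l, (((fs.filter (fun f => l ∈ f.2)).map
          (fun f => f.1 (Function.update x l y))).sum)) +
        (((fs.filter (fun f => l ∉ f.2)).map (fun f => f.1 x)).sum))) := by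
  have hrest : ∀ x (y : D l),
      ((fs.filter (fun f => l ∉ f.2)).map (fun f => f.1 (update x l y))).sum =
        ((fs.filter (fun f => l ∉ f.2)).map (fun f => f.1 x)).sum := fun x y =>
    congrArg List.sum <| List.map_congr_left fun f hf => by
      obtain ⟨hmem, hl⟩ := List.mem_filter.mp hf
      exact DependsOn.apply_update_of_notMem (fun x y => hscope f hmem x y)
        (by simpa using hl) x y
  rw [ciSup_eq_ciSup_ciSup_update _ l]
  refine iSup_congr fun x => ?_
  rw [ciSup_add (Finite.bddAbove_range _)]
  refine iSup_congr fun y => ?_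
  rw [← List.sum_map_filter_add_sum_map_filter_not (fun f => l ∈ f.2), hrest]
end

section
/- The variable elimination algorithm is correct: iterating the elimination step over all n variables (in any order given by a bijection O on {0..<n}) starting from a list fs of properly scoped functions yields a list of scope-free functions whose sum of values (on the empty assignment) equals max_{x ∈ X} Σ_{f ∈ fs} f(x). -/
open BigOperators

variable {n : ℕ}

/-- One step of variable elimination: eliminate variable `l` by replacing all functions whose
scope contains `l` by a single new function maximizing their sum over `D l`. -/
noncomputable def elimStep (D : Fin n → Type*) [∀ i, Fintype (D i)] [∀ i, Nonempty (D i)]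
    (l : Fin n) (fs : List ((((i : Fin n) → D i) → ℝ) × Finset (Fin n))) :
    List ((((i : Fin n) → D i) → ℝ) × Finset (Fin n)) :=
  let E := fs.filter (fun f => l ∈ f.2)
  let E' := fs.filter (fun f => l ∉ f.2)
  ((fun x => ⨆ y : D l, ((E.map (fun f => f.1 (Function.update x l y))).sum)),
    (E.foldr (fun (f : (((i : Fin n) → D i) → ℝ) × Finset (Fin n)) s => f.2 ∪ s) ∅).erase l) :: E'

/-!
Eliminating `l` replaces the functions whose scope contains `l` by the maximum over `D l` of
their sum. The other functions do not see `x l`, so the total of the new list at `x` is the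
maximum over `y` of the old total at `update x l y`. Iterating, the total after eliminating the
variables of `L` is the maximum of the original total over the assignments that agree with `x`
off `L`; once every variable is eliminated this is the global maximum. A variable missing from
all scopes stays missing, and the eliminated one is erased, so all scopes end up empty.
-/

open Function

lemma ciSup_update_piecewise {ι β : Type*} [DecidableEq ι] [Finite ι] {D : ι → Type*}
    [∀ i, Finite (D i)] [∀ i, Nonempty (D i)] [ConditionallyCompleteLattice β] [Nonempty β]
    (g : (∀ i, D i) → β) (s : Finset ι) (x : ∀ i, D i) (l : ι) :
    ⨆ z, ⨆ y : D l, g (update (s.piecewise z x) l y) = ⨆ z, g ((insert l s).piecewise z x) := by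
  refine le_antisymm (ciSup_le fun z => ciSup_le fun y => ?_) (ciSup_le fun z => ?_)
  · have : update (s.piecewise z x) l y = (insert l s).piecewise (update z l y) x := by
      ext i
      rcases eq_or_ne i l with rfl | hil <;> simp [Finset.piecewise, *]
    rw [this]
    exact le_ciSup (Finite.bddAbove_range fun z => g ((insert l s).piecewise z x)) (update z l y)
  · rw [Finset.piecewise_insert]
    exact (le_ciSup (Finite.bddAbove_range _) (z l)).trans
      (le_ciSup (Finite.bddAbove_range (fun z => ⨆ y : D l, g (update (s.piecewise z x) l y))) z)

lemma mem_foldr_union_snd {α β : Type*} [DecidableEq β] (E : List (α × Finset β)) (j : β) :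
    j ∈ E.foldr (fun f s => f.2 ∪ s) ∅ ↔ ∃ f ∈ E, j ∈ f.2 := by
  induction E with
  | nil => simp
  | cons a t ih => simp [ih]

section elimStep

variable {D : Fin n → Type*} [∀ i, Fintype (D i)] [∀ i, Nonempty (D i)]
  {gs : List ((((i : Fin n) → D i) → ℝ) × Finset (Fin n))}

lemma dependsOn_of_mem_elimStep {l : Fin n} (hgs : ∀ g ∈ gs, DependsOn g.1 g.2) :
    ∀ f ∈ elimStep D l gs, DependsOn f.1 f.2 := by
  simp only [elimStep, List.mem_cons, forall_eq_or_imp]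
  refine ⟨fun x x' hxx' => ?_, fun f hf => hgs f (List.mem_of_mem_filter hf)⟩
  refine congrArg _ (funext fun y => congrArg _ (List.map_congr_left fun g hg => ?_))
  refine hgs g (List.mem_of_mem_filter hg) fun j hj => ?_
  rcases eq_or_ne j l with rfl | hjl
  · simp
  · simpa [hjl] using hxx' j (Finset.mem_erase.2 ⟨hjl, (mem_foldr_union_snd _ j).2 ⟨g, hg, hj⟩⟩)

lemma sum_elimStep_apply {l : Fin n} (hgs : ∀ g ∈ gs, DependsOn g.1 g.2) (x : ∀ i, D i) :
    ((elimStep D l gs).map (·.1 x)).sum = ⨆ y : D l, (gs.map (·.1 (update x l y))).sum := by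
  have hsplit : ∀ y : D l, (gs.map (·.1 (update x l y))).sum
      = ((gs.filter (l ∈ ·.2)).map (·.1 (update x l y))).sum
        + ((gs.filter (l ∉ ·.2)).map (·.1 x)).sum := by
    intro y
    rw [← ((gs.filter_append_perm (l ∈ ·.2)).map (·.1 (update x l y))).sum_eq,
      List.map_append, List.sum_append]
    simp only [decide_not]
    refine congrArg _ (congrArg _ (List.map_congr_left fun g hg => ?_))
    have hlg : l ∉ g.2 := by simpa using List.of_mem_filter hg
    exact hgs g (List.mem_of_mem_filter hg) fun j hj => update_of_ne (ne_of_mem_of_not_mem hj hlg) ..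
  simp only [elimStep, List.map_cons, List.sum_cons, hsplit]
  exact (OrderIso.addRight _).map_ciSup (Finite.bddAbove_range _)

lemma notMem_of_mem_elimStep {l : Fin n} : ∀ f ∈ elimStep D l gs, l ∉ f.2 := by
  simp only [elimStep, List.mem_cons, forall_eq_or_imp]
  exact ⟨Finset.notMem_erase l _, fun f hf => by simpa using List.of_mem_filter hf⟩

lemma notMem_of_mem_elimStep_of_forall_notMem {l m : Fin n} (hgs : ∀ g ∈ gs, m ∉ g.2) :
    ∀ f ∈ elimStep D l gs, m ∉ f.2 := by
  simp only [elimStep, List.mem_cons, forall_eq_or_imp]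
  refine ⟨fun hm => ?_, fun f hf => hgs f (List.mem_of_mem_filter hf)⟩
  obtain ⟨g, hg, hmg⟩ := (mem_foldr_union_snd _ m).1 (Finset.mem_of_mem_erase hm)
  exact hgs g (List.mem_of_mem_filter hg) hmg

lemma notMem_of_mem_foldl_elimStep_of_forall_notMem {m : Fin n} (L : List (Fin n))
    (hgs : ∀ g ∈ gs, m ∉ g.2) : ∀ f ∈ L.foldl (fun gs l => elimStep D l gs) gs, m ∉ f.2 := by
  induction L generalizing gs with
  | nil => exact hgs
  | cons l L ih => exact ih (notMem_of_mem_elimStep_of_forall_notMem hgs)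

lemma notMem_of_mem_foldl_elimStep {m : Fin n} {L : List (Fin n)} (hm : m ∈ L) :
    ∀ f ∈ L.foldl (fun gs l => elimStep D l gs) gs, m ∉ f.2 := by
  induction L generalizing gs with
  | nil => simp at hm
  | cons l L ih =>
    rcases List.mem_cons.1 hm with rfl | hm
    · exact notMem_of_mem_foldl_elimStep_of_forall_notMem L notMem_of_mem_elimStep
    · exact ih hm

lemma sum_foldl_elimStep_apply (L : List (Fin n)) (hgs : ∀ g ∈ gs, DependsOn g.1 g.2)
    (x : ∀ i, D i) : ((L.foldl (fun gs l => elimStep D l gs) gs).map (·.1 x)).sum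
      = ⨆ z, (gs.map (·.1 (L.toFinset.piecewise z x))).sum := by
  induction L generalizing gs x with
  | nil => rw [List.toFinset_nil]; simp
  | cons l L ih =>
    simp only [List.foldl_cons, ih (dependsOn_of_mem_elimStep hgs), sum_elimStep_apply hgs]
    rw [List.toFinset_cons]
    exact ciSup_update_piecewise (fun w => (gs.map (·.1 w)).sum) _ x l

end elimStep

/-- correctness of variable elimination.  Iterating the elimination step over all
`n` variables, in the order given by a bijection `O`, starting from a list `fs` of properly
scoped functions, yields a list of scope-free functions whose sum of values (at any assignment
`x₀`, playing the role of the empty assignment) equals `⨆ x, ∑ f ∈ fs, f x`. -/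
theorem variable_elimination_correct (D : Fin n → Type*)
    [∀ i, Fintype (D i)] [∀ i, Nonempty (D i)]
    (fs : List ((((i : Fin n) → D i) → ℝ) × Finset (Fin n)))
    (O : Fin n → Fin n) (hO : Function.Bijective O)
    (hscope : ∀ f ∈ fs, ∀ x y : (i : Fin n) → D i,
      (∀ j ∈ f.2, x j = y j) → f.1 x = f.1 y) :
    (∀ f ∈ (List.finRange n).foldl (fun gs i => elimStep D (O i) gs) fs, f.2 = ∅) ∧
    (∀ x₀ : (i : Fin n) → D i,
      (((List.finRange n).foldl (fun gs i => elimStep D (O i) gs) fs).map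
          (fun f => f.1 x₀)).sum =
        ⨆ x : (i : Fin n) → D i, ((fs.map (fun f => f.1 x)).sum)) := by
  have hmem : ∀ m, m ∈ (List.finRange n).map O := fun m => by
    obtain ⟨i, rfl⟩ := hO.2 m
    exact List.mem_map_of_mem (List.mem_finRange i)
  have huniv : ((List.finRange n).map O).toFinset = Finset.univ :=
    Finset.eq_univ_of_forall fun m => List.mem_toFinset.2 (hmem m)
  rw [← List.foldl_map (g := fun gs l => elimStep D l gs)]
  refine ⟨fun f hf => Finset.eq_empty_of_forall_notMem fun m =>
    notMem_of_mem_foldl_elimStep (hmem m) f hf, fun x₀ => ?_⟩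
  rw [sum_foldl_elimStep_apply _ (fun f hf _ _ => hscope f hf _ _), huniv]
  simp only [Finset.piecewise_univ]
end

section
/- If f_a(x) := Q_w(x,a) − Q_w(x,d) (the bonus of action a over the default d w.r.t. weights w), and the decision list is formed by listing all pairs (t, a) with positive bonus over partial states t of scope T_a, appending the default branch (⊥, d), and sorting branches by decreasing bonus, then for every state x the action selected by the resulting decision list policy is greedy: Q_w(x, π(x)) = max_{a ∈ A} Q_w(x, a). -/
open BigOperators

/-- A full state `x : Fin n → V` is consistent with a partial state `t : Fin n → Option V`
iff `x` agrees with `t` wherever `t` is defined. -/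
def Consistent {n : ℕ} {V : Type*} (t : Fin n → Option V) (x : Fin n → V) : Prop :=
  ∀ i v, t i = some v → x i = v

/-! The branch selected for `x` carries the largest bonus among the branches matching `x`,
because the list is sorted and the selected branch is the first match.  That bonus equals
`Q x (π x) - Q x d`, and it is nonnegative since the default branch matches everything.
If some action `a` has positive bonus at `x`, then the restriction of `x` to the scope `T a`
is listed with that bonus, and it matches `x`; hence `Q x a - Q x d ≤ Q x (π x) - Q x d`. -/

theorem List.Pairwise.apply_le_of_first_match {α β : Type*} [Preorder β] {l : List α}
    {f : α → β} {P : α → Prop} (hl : l.Pairwise fun u v => f v ≤ f u) {i : Fin l.length}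
    (hfirst : ∀ j : Fin l.length, j < i → ¬ P (l.get j)) {b : α} (hb : b ∈ l) (hPb : P b) :
    f b ≤ f (l.get i) := by
  obtain ⟨j, rfl⟩ := List.mem_iff_get.mp hb
  rcases lt_trichotomy j i with hji | rfl | hij
  · exact absurd hPb (hfirst j hji)
  · exact le_rfl
  · exact hl.rel_get_of_lt hij

section PartialState

variable {n : ℕ} {V : Type*}

theorem consistent_none (x : Fin n → V) : Consistent (fun _ => none) x := by
  intro i v h
  cases h

def restrictTo (s : Finset (Fin n)) (x : Fin n → V) : Fin n → Option V :=
  fun i => if i ∈ s then some (x i) else none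

theorem isSome_restrictTo_iff (s : Finset (Fin n)) (x : Fin n → V) (i : Fin n) :
    (restrictTo s x i).isSome ↔ i ∈ s := by
  by_cases hi : i ∈ s <;> simp [restrictTo, hi]

theorem consistent_restrictTo_iff {s : Finset (Fin n)} {x y : Fin n → V} :
    Consistent (restrictTo s x) y ↔ ∀ i ∈ s, y i = x i := by
  constructor
  · intro h i hi
    exact h i (x i) (by simp [restrictTo, hi])
  · intro h i v hv
    by_cases hi : i ∈ s
    · simp only [restrictTo, hi, if_true, Option.some.injEq] at hv
      rw [h i hi, hv]
    · simp [restrictTo, hi] at hv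

theorem consistent_restrictTo_self (s : Finset (Fin n)) (x : Fin n → V) :
    Consistent (restrictTo s x) x :=
  consistent_restrictTo_iff.mpr fun _ _ => rfl

end PartialState

theorem dec_list_pol_greedy_general {n : ℕ} {V A : Type*} (d : A)
    (Q : (Fin n → V) → A → ℝ) (T : A → Finset (Fin n))
    (p : List ((Fin n → Option V) × A × ℝ)) (π : (Fin n → V) → A)
    -- `δ_a` has scope `T a`:
    (hscope : ∀ a : A, ∀ x y : Fin n → V, (∀ i ∈ T a, x i = y i) →
      Q x a - Q x d = Q y a - Q y d)
    -- every branch is either the default branch or a positive-bonus branch of some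
    -- non-default action `a` with domain exactly `T a`, recording the exact bonus:
    (hbranch : ∀ b ∈ p,
      (b.2.1 = d ∧ (∀ i, b.1 i = none) ∧ b.2.2 = 0) ∨
      (b.2.1 ≠ d ∧ (∀ i, (b.1 i).isSome ↔ i ∈ T b.2.1) ∧ 0 < b.2.2 ∧
        ∀ x : Fin n → V, Consistent b.1 x → Q x b.2.1 - Q x d = b.2.2))
    -- the default branch is present:
    (hdefault : ((fun _ => none : Fin n → Option V), d, (0 : ℝ)) ∈ p)
    -- completeness: every partial state with domain `T a` and positive bonus is listed:
    (hcomplete : ∀ a : A, a ≠ d → ∀ t : Fin n → Option V,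
      (∀ i, (t i).isSome ↔ i ∈ T a) →
      (∀ x : Fin n → V, Consistent t x → 0 < Q x a - Q x d) →
      ∃ b : ℝ, (t, a, b) ∈ p)
    -- `p` is sorted by decreasing bonus:
    (hsorted : p.Pairwise (fun u v => v.2.2 ≤ u.2.2))
    -- `π` selects the action of the first matching branch:
    (hπ : ∀ x : (Fin n → V), ∃ i : Fin p.length,
      Consistent (p.get i).1 x ∧ (∀ j : Fin p.length, j < i → ¬ Consistent (p.get j).1 x) ∧
      π x = (p.get i).2.1) :
    ∀ x : Fin n → V, ∀ a : A, Q x a ≤ Q x (π x) := by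
  intro x a
  obtain ⟨i, hmatch, hfirst, hπx⟩ := hπ x
  have bonus_eq : ∀ b ∈ p, Consistent b.1 x → Q x b.2.1 - Q x d = b.2.2 := by
    rintro b hb hbx
    rcases hbranch b hb with ⟨hbd, -, hb0⟩ | ⟨-, -, -, hbonus⟩
    · rw [hbd, hb0, sub_self]
    · exact hbonus x hbx
  have le_selected : ∀ b ∈ p, Consistent b.1 x → b.2.2 ≤ (p.get i).2.2 := fun b hb hbx =>
    hsorted.apply_le_of_first_match (P := fun b => Consistent b.1 x) hfirst hb hbx
  have selected_bonus : Q x (π x) - Q x d = (p.get i).2.2 := by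
    rw [hπx]; exact bonus_eq _ (p.get_mem i) hmatch
  have selected_nonneg := le_selected _ hdefault (consistent_none x)
  by_cases hpos : 0 < Q x a - Q x d
  · have had : a ≠ d := by rintro rfl; simp at hpos
    obtain ⟨b, hb⟩ := hcomplete a had (restrictTo (T a) x) (isSome_restrictTo_iff _ x)
      fun y hy => by
        rwa [hscope a y x fun j hj => consistent_restrictTo_iff.mp hy j hj]
    have hbx := consistent_restrictTo_self (T a) x
    have hbonus : Q x a - Q x d = b := bonus_eq _ hb hbx
    have hle : b ≤ (p.get i).2.2 := le_selected _ hb hbx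
    linarith
  · linarith

/-- greedy decision list policy.  The bonus of action `a` over the default `d`
is `δ_a x = Q x a − Q x d`; it has scope `T a`.  The decision list `p` consists of, for each
action `a ≠ d`, all partial states with domain `T a` and positive bonus (recording the bonus),
together with a default branch `(⊥, d, 0)`, and is sorted by decreasing bonus.  Then the
action selected by the decision list policy (first matching branch) is greedy for every
state `x`. -/
theorem dec_list_pol_greedy {n : ℕ} {V A : Type*} [Fintype A] (d : A)
    (Q : (Fin n → V) → A → ℝ) (T : A → Finset (Fin n))
    (p : List ((Fin n → Option V) × A × ℝ)) (π : (Fin n → V) → A)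
    -- `δ_a` has scope `T a`:
    (hscope : ∀ a : A, ∀ x y : Fin n → V, (∀ i ∈ T a, x i = y i) →
      Q x a - Q x d = Q y a - Q y d)
    -- every branch is either the default branch or a positive-bonus branch of some
    -- non-default action `a` with domain exactly `T a`, recording the exact bonus:
    (hbranch : ∀ b ∈ p,
      (b.2.1 = d ∧ (∀ i, b.1 i = none) ∧ b.2.2 = 0) ∨
      (b.2.1 ≠ d ∧ (∀ i, (b.1 i).isSome ↔ i ∈ T b.2.1) ∧ 0 < b.2.2 ∧
        ∀ x : Fin n → V, Consistent b.1 x → Q x b.2.1 - Q x d = b.2.2))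
    -- the default branch is present:
    (hdefault : ((fun _ => none : Fin n → Option V), d, (0 : ℝ)) ∈ p)
    -- completeness: every partial state with domain `T a` and positive bonus is listed:
    (hcomplete : ∀ a : A, a ≠ d → ∀ t : Fin n → Option V,
      (∀ i, (t i).isSome ↔ i ∈ T a) →
      (∀ x : Fin n → V, Consistent t x → 0 < Q x a - Q x d) →
      ∃ b : ℝ, (t, a, b) ∈ p)
    -- `p` is sorted by decreasing bonus:
    (hsorted : p.Pairwise (fun u v => v.2.2 ≤ u.2.2))
    -- `π` selects the action of the first matching branch:
    (hπ : ∀ x : (Fin n → V), ∃ i : Fin p.length,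
      Consistent (p.get i).1 x ∧ (∀ j : Fin p.length, j < i → ¬ Consistent (p.get j).1 x) ∧
      π x = (p.get i).2.1) :
    ∀ x : Fin n → V, ∀ a : A, Q x a ≤ Q x (π x) :=
  dec_list_pol_greedy_general d Q T p π hscope hbranch hdefault hcomplete hsorted hπ
end

section
/- The set of feasible solutions of the union of two LP constraint sets with distinct private-variable tags, projected onto the shared variables (φ and the weights w), equals the intersection of the projections of the feasible sets of the two constraint sets individually. -/
/-- constraints over shared variables `S` and tagged private variables
`T × P`.  A constraint set is represented by its set of satisfying assignments; `C` only
mentions the shared variables and the private variables of tag `p`, `C'` only those of tag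
`p'`, and `p ≠ p'`.  Then the projection onto the shared variables of the solutions of the
union (i.e. of `C ∩ C'` as sets of satisfying assignments) is the intersection of the
projections of the solutions of `C` and `C'`. -/
theorem union_constr_solution_inter {S P T : Type*} (p p' : T) (hpp' : p ≠ p')
    (C C' : Set ((S ⊕ T × P) → ℝ))
    (hC : ∀ f g : (S ⊕ T × P) → ℝ,
      (∀ s, f (Sum.inl s) = g (Sum.inl s)) →
      (∀ q, f (Sum.inr (p, q)) = g (Sum.inr (p, q))) → (f ∈ C ↔ g ∈ C))
    (hC' : ∀ f g : (S ⊕ T × P) → ℝ,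
      (∀ s, f (Sum.inl s) = g (Sum.inl s)) →
      (∀ q, f (Sum.inr (p', q)) = g (Sum.inr (p', q))) → (f ∈ C' ↔ g ∈ C')) :
    {w : S → ℝ | ∃ f ∈ C ∩ C', ∀ s, f (Sum.inl s) = w s} =
    {w : S → ℝ | ∃ f ∈ C, ∀ s, f (Sum.inl s) = w s} ∩
    {w : S → ℝ | ∃ f ∈ C', ∀ s, f (Sum.inl s) = w s} := by
  ext w
  constructor
  · rintro ⟨f, ⟨hf1, hf2⟩, hfw⟩
    exact ⟨⟨f, hf1, hfw⟩, ⟨f, hf2, hfw⟩⟩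
  · rintro ⟨⟨f, hf, hfw⟩, ⟨g, hg, hgw⟩⟩
    classical
    set h : (S ⊕ T × P) → ℝ := fun x =>
      match x with
      | Sum.inl s => w s
      | Sum.inr (t, q) => if t = p then f (Sum.inr (t, q)) else g (Sum.inr (t, q)) with hh
    refine ⟨h, ⟨?_, ?_⟩, fun s => rfl⟩
    · exact (hC h f (fun s => (hfw s).symm) (fun q => by simp [hh])).mpr hf
    · exact (hC' h g (fun s => (hgw s).symm) (fun q => by simp [hh, hpp'.symm])).mpr hg
end
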